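/- arXiv:math/0507357 — 2 statements merged into one kernel-verified Lean document; each statement's English description precedes it below -/
import Mathlib

section
/- Let H be a group generated by two elements a and b whose commutator subgroup H' is central of prime order p. Then in any group ring of H over a commutative ring in which the binomial coefficients (1/p)·C(p,r) make sense as integers, (a+b)^p = a^p + b^p + ∑_{r=1}^{p−1} (1/p)·C(p,r) · a^r b^{p−r} · Ĥ', where Ĥ' = ∑_{h∈H'} h. -/
/-!
Put `c = ⁅b, a⁆`, which is central, so that `b a = a b c`. In the group ring the letters
`A = a`, `B = b` therefore satisfy `B A = A B C` with `C = c` central, and `(A + B)^p` expands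
by the `q`-binomial theorem with `q = C`. Since `c` has order `p`, the Gaussian binomial
`[p, r]_C` (`0 < r < p`) is killed by `C^r - 1`; as `c^r` generates `H'`, its coefficients are
constant on `H'`, so it is an integer multiple `k • Ĥ'`. Computing in `ℤ[H']` and applying the
augmentation gives `C(p, r) = k p`.
-/

open MonoidAlgebra

/-- `Ĥ' = ∑_{h ∈ H'} h` in the group ring. -/
noncomputable def subgroupSum (R : Type*) [CommRing R] (H : Type*) [Group H]
    (D : Subgroup H) [Fintype D] : MonoidAlgebra R H :=
  ∑ d : D, MonoidAlgebra.of R H (d : H)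

open scoped commutatorElement

/-- The Gaussian binomial coefficient `[n, r]_q`. -/
def qChoose {M : Type*} [Semiring M] (q : M) : ℕ → ℕ → M
  | _, 0 => 1
  | 0, _ + 1 => 0
  | n + 1, r + 1 => qChoose q n (r + 1) + q ^ (n - r) * qChoose q n r

section Semiring

variable {M : Type*} [Semiring M] (q : M)

@[simp] lemma qChoose_zero_right (n : ℕ) : qChoose q n 0 = 1 := by
  cases n <;> rfl

@[simp] lemma qChoose_zero_succ (r : ℕ) : qChoose q 0 (r + 1) = 0 := rfl

lemma qChoose_succ_succ (n r : ℕ) :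
    qChoose q (n + 1) (r + 1) = qChoose q n (r + 1) + q ^ (n - r) * qChoose q n r := rfl

lemma qChoose_eq_zero_of_lt {n r : ℕ} (h : n < r) : qChoose q n r = 0 := by
  induction n generalizing r with
  | zero => obtain ⟨r, rfl⟩ := Nat.exists_eq_succ_of_ne_zero h.ne'; rfl
  | succ n ih =>
    obtain ⟨r, rfl⟩ := Nat.exists_eq_succ_of_ne_zero (Nat.ne_zero_of_lt h)
    rw [qChoose_succ_succ, ih (by omega), ih (by omega), mul_zero, add_zero]

@[simp] lemma qChoose_self (n : ℕ) : qChoose q n n = 1 := by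
  induction n with
  | zero => rfl
  | succ n ih => rw [qChoose_succ_succ, qChoose_eq_zero_of_lt q n.lt_succ_self, ih, Nat.sub_self,
      pow_zero, mul_one, zero_add]

lemma qChoose_one (n r : ℕ) : qChoose (1 : M) n r = n.choose r := by
  induction n generalizing r with
  | zero => cases r <;> simp
  | succ n ih =>
    cases r with
    | zero => simp
    | succ r =>
      rw [qChoose_succ_succ, ih, ih, one_pow, one_mul, Nat.choose_succ_succ', Nat.cast_add,
        add_comm]

lemma map_qChoose {N F : Type*} [Semiring N] [FunLike F M N] [RingHomClass F M N] (f : F)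
    (n r : ℕ) : f (qChoose q n r) = qChoose (f q) n r := by
  induction n generalizing r with
  | zero => cases r <;> simp
  | succ n ih =>
    cases r with
    | zero => simp
    | succ r => rw [qChoose_succ_succ, qChoose_succ_succ, map_add, map_mul, map_pow, ih, ih]

variable {q}

lemma Commute.qChoose_right {x : M} (h : Commute x q) (n r : ℕ) : Commute x (qChoose q n r) := by
  induction n generalizing r with
  | zero => cases r <;> simp
  | succ n ih =>
    cases r with
    | zero => simp
    | succ r => exact (ih (r + 1)).add_right ((h.pow_right _).mul_right (ih r))

variable {A B : M}

lemma pow_mul_eq_mul_pow_mul_pow (hqB : Commute q B) (hBA : B * A = A * B * q) (s : ℕ) :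
    B ^ s * A = A * B ^ s * q ^ s := by
  induction s with
  | zero => simp
  | succ s ih =>
    calc B ^ (s + 1) * A = B ^ s * A * B * q := by
          rw [pow_succ, mul_assoc, hBA]; simp only [mul_assoc]
      _ = A * B ^ (s + 1) * q ^ (s + 1) := by
        rw [ih, mul_assoc _ (q ^ s), (hqB.pow_left s).eq]; simp only [pow_succ, mul_assoc]

lemma add_pow_eq_sum_qChoose (hqA : Commute q A) (hqB : Commute q B) (hBA : B * A = A * B * q)
    (n : ℕ) :
    (A + B) ^ n = ∑ r ∈ Finset.range (n + 1), A ^ r * B ^ (n - r) * qChoose q n r := by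
  induction n with
  | zero => simp
  | succ n ih =>
    have hA : ∀ r, A ^ r * B ^ (n - r) * qChoose q n r * A
        = A ^ (r + 1) * B ^ (n - r) * (q ^ (n - r) * qChoose q n r) := fun r => by
      rw [mul_assoc, ← (hqA.symm.qChoose_right n r).eq, ← mul_assoc, mul_assoc (A ^ r),
        pow_mul_eq_mul_pow_mul_pow hqB hBA]
      simp only [pow_succ, mul_assoc]
    have hB : ∀ r ≤ n, A ^ r * B ^ (n - r) * qChoose q n r * B
        = A ^ r * B ^ (n + 1 - r) * qChoose q n r := fun r hr => by
      rw [mul_assoc, ← (hqB.symm.qChoose_right n r).eq, Nat.sub_add_comm hr, pow_succ]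
      simp only [mul_assoc]
    have hshift : ∑ r ∈ Finset.range (n + 1), A ^ r * B ^ (n + 1 - r) * qChoose q n r
        = ∑ r ∈ Finset.range (n + 1), A ^ (r + 1) * B ^ (n - r) * qChoose q n (r + 1)
          + B ^ (n + 1) := by
      rw [Finset.sum_range_succ', Finset.sum_range_succ _ n,
        qChoose_eq_zero_of_lt q n.lt_succ_self, mul_zero, add_zero]
      simp
    rw [pow_succ, ih, Finset.sum_mul]
    simp_rw [mul_add]
    rw [Finset.sum_add_distrib, Finset.sum_congr rfl fun r _ => hA r,
      Finset.sum_congr rfl fun r hr => hB r (Finset.mem_range_succ_iff.mp hr), hshift,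
      Finset.sum_range_succ' _ (n + 1)]
    simp only [qChoose_succ_succ, Nat.add_sub_add_right, mul_add, Finset.sum_add_distrib, pow_zero,
      Nat.sub_zero, one_mul, qChoose_zero_right, mul_one]
    abel

end Semiring

section CommRing

variable {M : Type*} [CommRing M] (q : M)

lemma pow_succ_sub_one_mul_qChoose_succ (n r : ℕ) :
    (q ^ (r + 1) - 1) * qChoose q n (r + 1) = (q ^ (n - r) - 1) * qChoose q n r := by
  induction n generalizing r with
  | zero => cases r <;> simp
  | succ n ih =>
    rcases lt_trichotomy (n + 1) r with hr | rfl | hr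
    · rw [qChoose_eq_zero_of_lt q hr, qChoose_eq_zero_of_lt q (by omega), mul_zero, mul_zero]
    · rw [qChoose_eq_zero_of_lt q (by omega), Nat.sub_self, pow_zero, sub_self, zero_mul, mul_zero]
    cases r with
    | zero =>
      rw [qChoose_succ_succ]
      have := ih 0
      simp only [qChoose_zero_right, Nat.sub_zero, mul_one, zero_add, pow_one] at this ⊢
      linear_combination this + (q - 1) * (pow_succ' q n).symm
    | succ s =>
      rw [qChoose_succ_succ, qChoose_succ_succ, Nat.add_sub_add_right]
      have h1 : q ^ (n - (s + 1)) * q ^ (s + 2) = q ^ (n + 1) := by rw [← pow_add]; congr 1; omega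
      have h2 : q ^ (n - s) * q ^ (s + 1) = q ^ (n + 1) := by rw [← pow_add]; congr 1; omega
      linear_combination ih (s + 1) + q ^ (n - s) * ih s + qChoose q n (s + 1) * (h1 - h2)

variable {q}

lemma pow_sub_one_mul_qChoose_eq_zero {n : ℕ} (hq : q ^ n = 1) {r : ℕ} (hr : r ≤ n) :
    (q ^ r - 1) * qChoose q n r = 0 := by
  induction r with
  | zero => simp
  | succ r ih =>
    have hfix : q ^ r * qChoose q n r = qChoose q n r := by
      linear_combination ih (by omega)
    rw [pow_succ_sub_one_mul_qChoose_succ]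
    linear_combination -(q ^ (n - r)) * hfix +
      qChoose q n r * (pow_sub_mul_pow q (by omega : r ≤ n) + hq)

end CommRing

namespace MonoidAlgebra

variable {k G : Type*} [Semiring k] [Group G] [Fintype G]

lemma eq_coeff_one_smul_sum_of_of_mul_eq_self {t : G} (ht : Subgroup.zpowers t = ⊤) {x : k[G]}
    (hx : of k G t * x = x) : x = x.coeff 1 • ∑ g : G, of k G g := by
  have hshift : ∀ g, x.coeff (t * g) = x.coeff g := fun g => by
    conv_lhs => rw [← hx]
    rw [of_apply, coeff_single_mul_apply, inv_mul_cancel_left, one_mul]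
  have hpow : ∀ n : ℤ, x.coeff (t ^ n) = x.coeff 1 := fun n => by
    induction n using Int.induction_on with
    | zero => rw [zpow_zero]
    | succ n ih => rw [add_comm, zpow_one_add, hshift, ih]
    | pred n ih => rw [← hshift, ← zpow_one_add, add_sub_cancel, ih]
  ext g
  obtain ⟨n, rfl⟩ := Subgroup.mem_zpowers_iff.mp (ht ▸ Subgroup.mem_top g)
  simp [coeff_sum, of_apply, coeff_single, hpow]

end MonoidAlgebra

lemma qChoose_of_eq_smul_sum {G : Type*} [CommGroup G] [Fintype G] {p : ℕ} (hp : p.Prime)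
    (hG : Nat.card G = p) {g : G} (hg : g ≠ 1) {r : ℕ} (hr0 : 0 < r) (hrp : r < p) :
    qChoose (of ℤ G g) p r = (p.choose r / p) • ∑ h : G, of ℤ G h := by
  have := Fact.mk hp
  set x := qChoose (of ℤ G g) p r
  have hfix : of ℤ G (g ^ r) * x = x := by
    have hq : of ℤ G g ^ p = 1 := by rw [← map_pow, ← hG, pow_card_eq_one', map_one]
    linear_combination (map_pow (of ℤ G) g r) * x + pow_sub_one_mul_qChoose_eq_zero hq hrp.le
  have hgen : Subgroup.zpowers (g ^ r) = ⊤ := by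
    refine zpowers_eq_top_of_prime_card hG (pow_ne_one_of_lt_orderOf hr0.ne' ?_)
    rwa [orderOf_eq_prime (hG ▸ pow_card_eq_one') hg]
  have hx := MonoidAlgebra.eq_coeff_one_smul_sum_of_of_mul_eq_self hgen hfix
  -- `lift ℤ ℤ G 1` is the augmentation `ℤ[G] → ℤ`
  have haug := congrArg (lift ℤ ℤ G 1) hx
  rw [map_qChoose, lift_of, MonoidHom.one_apply, qChoose_one, map_zsmul, map_sum] at haug
  simp only [lift_of, MonoidHom.one_apply, Finset.sum_const, Finset.card_univ,
    ← Nat.card_eq_fintype_card, hG] at haug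
  have hcoeff : x.coeff 1 = (p.choose r / p : ℕ) := by
    refine mul_right_cancel₀ (Nat.cast_ne_zero.mpr hp.ne_zero : (p : ℤ) ≠ 0) ?_
    rw [← Nat.cast_mul, Nat.div_mul_cancel (hp.dvd_choose_self hr0.ne' hrp), haug, smul_eq_mul,
      nsmul_one]
  rw [hx, hcoeff, natCast_zsmul]

open scoped IsMulCommutative in
lemma qChoose_of_eq_smul_subgroupSum (R : Type*) [CommRing R] {H : Type*} [Group H]
    {D : Subgroup H} [Fintype D] (hD : D ≤ Subgroup.center H) {p : ℕ} (hp : p.Prime)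
    (hcard : Nat.card D = p) {c : H} (hc : c ∈ D) (hc1 : c ≠ 1) {r : ℕ} (hr0 : 0 < r)
    (hrp : r < p) : qChoose (of R H c) p r = (p.choose r / p) • subgroupSum R H D := by
  have : IsMulCommutative D :=
    .of_setLike_mul_comm fun x _ y hy => Subgroup.mem_center_iff.mp (hD hy) x
  have h := congrArg (lift ℤ (MonoidAlgebra R H) D ((of R H).comp D.subtype))
    (qChoose_of_eq_smul_sum hp hcard (g := ⟨c, hc⟩) (by simpa using hc1) hr0 hrp)
  simpa [map_qChoose, map_nsmul, map_sum, subgroupSum] using h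

lemma commutator_eq_bot_of_closure_pair_eq_top {G : Type*} [Group G] {a b : G}
    (hgen : Subgroup.closure {a, b} = ⊤) (hab : Commute a b) : commutator G = ⊥ := by
  rw [commutator_def, ← hgen, Subgroup.commutator_eq_bot_iff_le_centralizer,
    Subgroup.centralizer_closure, Subgroup.closure_le]
  rintro x (rfl | rfl) <;> rw [SetLike.mem_coe, Subgroup.mem_centralizer_iff] <;>
    rintro y (rfl | rfl)
  all_goals first | rfl | exact hab.eq | exact hab.eq.symm

/-- If `H = ⟨a, b⟩` has central commutator subgroup `H'` of prime order `p`, then in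
any group ring of `H`,
`(a+b)^p = a^p + b^p + ∑_{r=1}^{p-1} (1/p)·C(p,r) · a^r b^{p-r} · Ĥ'`. -/
theorem add_pow_p_formula (R : Type*) [CommRing R] (H : Type*) [Group H]
    [Fintype (commutator H)] (p : ℕ) (hp : p.Prime) (a b : H)
    (hgen : Subgroup.closure ({a, b} : Set H) = ⊤)
    (hcentral : commutator H ≤ Subgroup.center H)
    (hcard : Nat.card (commutator H) = p) :
    (MonoidAlgebra.of R H a + MonoidAlgebra.of R H b) ^ p =
      MonoidAlgebra.of R H (a ^ p) + MonoidAlgebra.of R H (b ^ p) +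
      ∑ r ∈ Finset.Ico 1 p, (p.choose r / p) •
        (MonoidAlgebra.of R H (a ^ r * b ^ (p - r)) * subgroupSum R H (commutator H)) := by
  set c := ⁅b, a⁆ with hc
  have hc_mem : c ∈ commutator H :=
    Subgroup.commutator_mem_commutator (Subgroup.mem_top b) (Subgroup.mem_top a)
  have hc_central : ∀ x : H, x * c = c * x := Subgroup.mem_center_iff.mp (hcentral hc_mem)
  have hc_ne : c ≠ 1 := fun h => by
    rw [commutator_eq_bot_of_closure_pair_eq_top hgen
      (commutatorElement_eq_one_iff_commute.mp h).symm, Subgroup.card_bot] at hcard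
    exact hp.one_lt.ne hcard
  have hba : b * a = a * b * c := by rw [hc_central (a * b), hc, commutatorElement_def]; group
  have hcomm : ∀ x, Commute (of R H c) (of R H x) := fun x => by
    rw [Commute, SemiconjBy, ← map_mul, ← map_mul, hc_central]
  have hBA : of R H b * of R H a = of R H a * of R H b * of R H c := by
    rw [← map_mul, ← map_mul, ← map_mul, hba]
  rw [add_pow_eq_sum_qChoose (hcomm a) (hcomm b) hBA p,
    Finset.sum_range_succ, Finset.range_eq_Ico, Finset.sum_eq_sum_Ico_succ_bot hp.pos,
    Finset.sum_congr rfl fun r hr => by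
      rw [qChoose_of_eq_smul_subgroupSum R hcentral hp hcard hc_mem hc_ne
        (Finset.mem_Ico.mp hr).1 (Finset.mem_Ico.mp hr).2]]
  simp only [pow_zero, one_mul, Nat.sub_zero, Nat.sub_self, qChoose_zero_right, qChoose_self,
    mul_one, map_pow, map_mul, mul_smul_comm]
  abel
end

section
/- Let G be a finite p-group with commutator subgroup G' of order p. Then the commutator subgroup of the group of normalized units V(𝔽_p G) has exponent p. -/
open MonoidAlgebra

/-- The augmentation map `𝔽_p G → 𝔽_p`. -/
noncomputable def aug (p : ℕ) [Fact p.Prime] (G : Type*) [Group G] :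
    MonoidAlgebra (ZMod p) G →ₐ[ZMod p] ZMod p :=
  MonoidAlgebra.lift (ZMod p) (ZMod p) G 1

/-- The group `V(𝔽_p G)` of normalized units (units of augmentation `1`). -/
noncomputable def V (p : ℕ) [Fact p.Prime] (G : Type*) [Group G] :
    Subgroup (MonoidAlgebra (ZMod p) G)ˣ :=
  (Units.map (aug p G : MonoidAlgebra (ZMod p) G →* ZMod p)).ker

/-!
Let `c` generate `G'`. As a normal subgroup of order `p` of a `p`-group, `G'` is central. The
kernel of `𝔽_p G → 𝔽_p[G/G']` is the ideal generated by `c - 1`, and it contains `x - 1` for every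
`x ∈ V'` because `𝔽_p[G/G']` is commutative. So `x = 1 + b (c - 1)` with `c - 1` central, and in
characteristic `p` we get `x ^ p = 1 + b ^ p (c ^ p - 1) = 1`. Finally `G' ≤ V'` is nontrivial, so
the exponent is exactly `p`.
-/

theorem IsPGroup.le_center_of_card_eq_prime {p : ℕ} [Fact p.Prime] {G : Type*} [Group G]
    (hG : IsPGroup p G) {N : Subgroup G} [N.Normal] (hN : Nat.card N = p) :
    N ≤ Subgroup.center G := by
  have : Finite N := Nat.finite_of_card_ne_zero (hN ▸ (Fact.out : p.Prime).ne_zero)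
  have : IsCyclic N := isCyclic_of_prime_card hN
  -- the image of `G` in `Aut N` is a `p`-group of order dividing `|Aut N| = p - 1`
  have hconj : (MulAut.conjNormal : G →* MulAut N) = 1 := by
    rw [← MonoidHom.range_eq_bot_iff, ← Subgroup.card_eq_one]
    have hdvd : Nat.card (MulAut.conjNormal : G →* MulAut N).range ∣ p - 1 := by
      rw [← Nat.totient_prime Fact.out, ← hN, ← IsCyclic.card_mulAut]
      exact Subgroup.card_subgroup_dvd_card _
    have hp := (Fact.out : p.Prime).two_le
    refine (hG.of_surjective _ (MonoidHom.rangeRestrict_surjective _)).card_eq_or_dvd.resolve_right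
      fun hdvd' => Nat.not_dvd_of_pos_of_lt (by omega) (by omega) (hdvd'.trans hdvd)
  intro n hn
  refine Subgroup.mem_center_iff.2 fun g => ?_
  have hgn := congrArg Subtype.val (DFunLike.congr_fun (DFunLike.congr_fun hconj g) ⟨n, hn⟩)
  rw [MulAut.conjNormal_apply] at hgn
  calc g * n = g * n * g⁻¹ * g := by group
    _ = n * g := by rw [hgn]; rfl

theorem pow_eq_one_of_sub_one_eq_mul {R : Type*} [Ring R] (p : ℕ) [ExpChar R p] {a b y : R}
    (hby : Commute b y) (hy : y ^ p = 0) (ha : a - 1 = b * y) : a ^ p = 1 := by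
  rw [← sub_eq_zero, ← one_pow p, ← sub_pow_expChar_of_commute p (Commute.one_right a), ha,
    hby.mul_pow, hy, mul_zero]

namespace MonoidAlgebra

variable {k G : Type*} [Ring k]

theorem of_mul_pow_sub_of_mem_span [Monoid G] (g c : G) (n : ℕ) :
    of k G (g * c ^ n) - of k G g ∈ Ideal.span {of k G c - 1} := by
  refine Ideal.mem_span_singleton'.2 ⟨of k G g * ∑ i ∈ Finset.range n, of k G c ^ i, ?_⟩
  rw [mul_assoc, geom_sum_mul, map_mul, map_pow, mul_sub, mul_one]

theorem sub_mapDomain_mem_span [Monoid G] {c : G} {τ : G → G}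
    (hτ : ∀ g, ∃ n : ℕ, τ g * c ^ n = g) (a : k[G]) :
    a - mapDomain τ a ∈ Ideal.span {of k G c - 1} := by
  induction a using MonoidAlgebra.induction_linear with
  | zero => simp
  | add a a' ha ha' =>
    rw [mapDomain_add, add_sub_add_comm]
    exact Ideal.add_mem _ ha ha'
  | single g r =>
    obtain ⟨n, hn⟩ := hτ g
    have : single g r - single (τ g) r = single 1 r * (of k G (τ g * c ^ n) - of k G (τ g)) := by
      rw [hn, mul_sub, of_apply, of_apply, single_mul_single, single_mul_single, one_mul, one_mul,
        mul_one]
    rw [mapDomain_single, this]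
    exact Ideal.mul_mem_left _ _ (of_mul_pow_sub_of_mem_span _ _ _)

theorem exists_mul_sub_one_eq_of_mapDomain_eq_zero [Group G] {H : Type*} [Group H] (f : G →* H)
    {c : G} (hc : ∀ g, f g = 1 → g ∈ Submonoid.powers c) {a : k[G]} (ha : mapDomain f a = 0) :
    ∃ b, b * (of k G c - 1) = a := by
  set t := Function.invFun f
  have hτ : ∀ g, ∃ n : ℕ, t (f g) * c ^ n = g := by
    intro g
    obtain ⟨n, hn⟩ := hc ((t (f g))⁻¹ * g) <| by
      rw [map_mul, map_inv, Function.invFun_eq (f := f) ⟨g, rfl⟩, inv_mul_cancel]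
    exact ⟨n, by rw [show c ^ n = _ from hn, mul_inv_cancel_left]⟩
  have hcomp : mapDomain (t ∘ f) a = 0 := by
    rw [← mapDomain_zero t, ← ha]
    ext; simp [Finsupp.mapDomain_comp]
  simpa only [hcomp, sub_zero, Ideal.mem_span_singleton'] using
    sub_mapDomain_mem_span (τ := t ∘ f) hτ a

end MonoidAlgebra

theorem Subgroup.exists_forall_mem_powers_of_card_eq_prime {p : ℕ} [Fact p.Prime] {G : Type*}
    [Group G] {N : Subgroup G} (hN : Nat.card N = p) :
    ∃ c ∈ N, ∀ g ∈ N, g ∈ Submonoid.powers c := by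
  have : Finite N := Nat.finite_of_card_ne_zero (hN ▸ (Fact.out : p.Prime).ne_zero)
  have : IsCyclic N := isCyclic_of_prime_card hN
  obtain ⟨c, hc⟩ := IsCyclic.exists_generator (α := N)
  refine ⟨c, c.2, fun g hg => ?_⟩
  obtain ⟨n, hn⟩ := mem_powers_iff_mem_zpowers.2 (hc ⟨g, hg⟩)
  exact ⟨n, congrArg Subtype.val hn⟩

section NormalizedUnits

variable {p : ℕ} [Fact p.Prime] {G : Type*} [Group G]

variable (p G) in
noncomputable def toV : G →* V p G :=
  ((Units.map (of (ZMod p) G : G →* (ZMod p)[G])).comp toUnits.toMonoidHom).codRestrict (V p G)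
    fun g => Units.ext <| by simp [aug]

theorem toV_injective : Function.Injective (toV p G) := fun _ _ hgh =>
  of_injective (congrArg (fun x : V p G => ((x : ((ZMod p)[G])ˣ) : (ZMod p)[G])) hgh)

theorem map_toV_commutator_le : (commutator G).map (toV p G) ≤ commutator (V p G) := by
  rw [commutator_def, Subgroup.map_commutator]
  exact Subgroup.commutator_mono le_top le_top

theorem nontrivial_commutator_V [Nontrivial (commutator G)] : Nontrivial (commutator (V p G)) := by
  obtain ⟨g, hg, hg1⟩ := (Subgroup.nontrivial_iff_exists_ne_one _).1 ‹Nontrivial (commutator G)›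
  refine (Subgroup.nontrivial_iff_exists_ne_one _).2
    ⟨toV p G g, map_toV_commutator_le ⟨g, hg, rfl⟩, fun h => hg1 (toV_injective (p := p) ?_)⟩
  rw [h, map_one]

theorem pow_eq_one_of_mem_commutator_V {c : G} (hc : c ∈ Subgroup.center G) (hcp : c ^ p = 1)
    (hgen : ∀ g ∈ commutator G, g ∈ Submonoid.powers c) {x : V p G}
    (hx : x ∈ commutator (V p G)) : x ^ p = 1 := by
  have : CharP (ZMod p)[G] p := charP_of_injective_algebraMap' (ZMod p) p
  let π : V p G →* ((ZMod p)[Abelianization G])ˣ :=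
    (Units.map (mapDomainRingHom (ZMod p) Abelianization.of).toMonoidHom).comp (V p G).subtype
  set a : (ZMod p)[G] := ((x : ((ZMod p)[G])ˣ) : (ZMod p)[G])
  have hπ : mapDomain Abelianization.of (a - 1) = 0 := by
    have hπa : mapDomainRingHom (ZMod p) Abelianization.of a = 1 :=
      congrArg Units.val (Abelianization.commutator_subset_ker π hx)
    rwa [← sub_eq_zero, ← map_one (mapDomainRingHom (ZMod p) Abelianization.of), ← map_sub] at hπa
  obtain ⟨b, hb⟩ := exists_mul_sub_one_eq_of_mapDomain_eq_zero Abelianization.of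
    (fun g hg => hgen g (Abelianization.ker_of (G := G) ▸ hg)) hπ
  have hc_sub_one_pow : (of (ZMod p) G c - 1) ^ p = 0 := by
    rw [sub_pow_expChar_of_commute p (Commute.one_right _), one_pow, ← map_pow, hcp, map_one,
      sub_self]
  have hcomm : Commute b (of (ZMod p) G c - 1) :=
    (of_commute (fun g => (Subgroup.mem_center_iff.1 hc g).symm) b).symm.sub_right (.one_right b)
  exact Subtype.ext <| Units.ext <| pow_eq_one_of_sub_one_eq_mul p hcomm hc_sub_one_pow hb.symm

end NormalizedUnits

theorem exponent_commutator_V_general (p : ℕ) [Fact p.Prime] (G : Type*) [Group G]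
    (hG : IsPGroup p G) (hG' : Nat.card (commutator G) = p) :
    Monoid.exponent (commutator ↥(V p G)) = p := by
  have hp : p.Prime := Fact.out
  obtain ⟨c, hc, hgen⟩ := Subgroup.exists_forall_mem_powers_of_card_eq_prime hG'
  have hcp : c ^ p = 1 := orderOf_dvd_iff_pow_eq_one.1 (hG' ▸ Subgroup.orderOf_dvd_natCard _ hc)
  have : Nontrivial (commutator G) := (Subgroup.nontrivial_iff_ne_bot _).2 fun h =>
    hp.ne_one (hG' ▸ Subgroup.card_eq_one.2 h)
  have : Nontrivial (commutator (V p G)) := nontrivial_commutator_V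
  refine (Monoid.exponent_eq_prime_iff hp).2 fun x hx => orderOf_eq_prime ?_ hx
  exact Subtype.ext <|
    pow_eq_one_of_mem_commutator_V (hG.le_center_of_card_eq_prime hG' hc) hcp hgen x.2

/-- If `G` is a finite `p`-group with `|G'| = p`, then the commutator subgroup of the
group of normalized units `V(𝔽_p G)` has exponent `p`. -/
theorem exponent_commutator_V (p : ℕ) [Fact p.Prime] (G : Type*) [Group G]
    [Fintype G] (hG : IsPGroup p G) (hG' : Nat.card (commutator G) = p) :
    Monoid.exponent (commutator ↥(V p G)) = p :=
  exponent_commutator_V_general p G hG hG'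
end
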